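/- arXiv:1507.02192 — 4 statements merged into one kernel-verified Lean document; each statement's English description precedes it below -/
import Mathlib

section
/- Let (R, φ) be a Picard–Vessiot extension for the system φY = AY over (k, φ), and assume that R contains no element x with x² + 1 = 0. Then (R[i], φ) is a Picard–Vessiot extension for the system φY = AY over (k[i], φ). -/
/-!
A nonzero difference ideal `I` of `R[i]` has a nonzero ideal of "real parts"
`{a | a + b i ∈ I for some b}`, which is again a difference ideal, hence all of `R`. So
`1 + b i ∈ I` for some `b`, and `1 + b² = (1 + b i)(1 - b i)` is a nonzero element of the
difference ideal `I ∩ R`, forcing `I ∩ R = R` and `I = R[i]`. A fundamental matrix over `R`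
stays one over `R[i]`, and it generates `R[i]` over `k[i]` because `R[i] = R + R i`.
-/

universe u v w x

open scoped TensorProduct

section DifferenceAlgebra

variable {R : Type*} [CommRing R]

/-- A difference ideal of `(R, φ)`: an ideal stable under `φ`. -/
def IsDiffIdeal (φ : R ≃+* R) (I : Ideal R) : Prop :=
  ∀ y ∈ I, φ y ∈ I

/-- A simple difference ring: the only difference ideals are `(0)` and `R`. -/
def IsSimpleDiffRing (φ : R ≃+* R) : Prop :=
  ∀ I : Ideal R, IsDiffIdeal φ I → I = ⊥ ∨ I = ⊤

/-- A real (commutative) ring: `0` is not a sum of squares of nonzero elements. -/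
def IsRealRing (A : Type*) [CommRing A] : Prop :=
  ∀ (m : ℕ) (f : Fin m → A), (∀ i, f i ≠ 0) → ∑ i, f i ^ 2 = 0 → m = 0

/-- A real closed field: a real field with no proper real algebraic extension. -/
def IsRealClosedField (C : Type u) [Field C] : Prop :=
  IsRealRing C ∧ ∀ (L : Type u) [Field L] [Algebra C L],
    Algebra.IsAlgebraic C L → IsRealRing L → Function.Surjective (algebraMap C L)

/-- The field of constants of a difference field `(k, φ)`. -/
def fixedSubfield {k : Type*} [Field k] (φ : k ≃+* k) : Subfield k where
  carrier := {y | φ y = y}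
  mul_mem' := fun {a b} ha hb => by
    simp only [Set.mem_setOf_eq, map_mul] at *
    rw [ha, hb]
  one_mem' := map_one φ
  add_mem' := fun {a b} ha hb => by
    simp only [Set.mem_setOf_eq, map_add] at *
    rw [ha, hb]
  zero_mem' := map_zero φ
  neg_mem' := fun {a} ha => by
    simp only [Set.mem_setOf_eq, map_neg] at *
    rw [ha]
  inv_mem' := fun a ha => by
    simp only [Set.mem_setOf_eq, map_inv₀] at *
    rw [ha]

/-- `(S, φS)` is a difference ring extension of `(k, φk)`. -/
def DiffCompat {k : Type*} [CommRing k] (S : Type*) [CommRing S] [Algebra k S]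
    (φk : k ≃+* k) (φS : S ≃+* S) : Prop :=
  ∀ y : k, φS (algebraMap k S y) = algebraMap k S (φk y)

/-- `U` is a fundamental matrix of solutions of `φ Y = A Y` in `S`. -/
def IsFundamentalMatrix {k : Type*} [CommRing k] {S : Type*} [CommRing S] [Algebra k S]
    (φS : S ≃+* S) {n : ℕ} (A : Matrix (Fin n) (Fin n) k)
    (U : Matrix (Fin n) (Fin n) S) : Prop :=
  IsUnit U.det ∧ U.map ⇑φS = A.map (algebraMap k S) * U

/-- `S` is generated, as a `k`-algebra, by the entries of `U` and `det(U)⁻¹`. -/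
def GeneratedByFund (k : Type*) [CommSemiring k] {S : Type*} [CommRing S] [Algebra k S]
    {n : ℕ} (U : Matrix (Fin n) (Fin n) S) : Prop :=
  Algebra.adjoin k ((Set.range fun p : Fin n × Fin n => U p.1 p.2) ∪ {Ring.inverse U.det}) = ⊤

/-- A Picard–Vessiot extension for `φ Y = A Y` over `(k, φk)`. -/
def IsPicardVessiot (k : Type*) [Field k] (S : Type*) [CommRing S] [Algebra k S]
    (φk : k ≃+* k) (φS : S ≃+* S) {n : ℕ} (A : Matrix (Fin n) (Fin n) k) : Prop :=
  Nontrivial S ∧ DiffCompat S φk φS ∧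
    (∃ U : Matrix (Fin n) (Fin n) S, IsFundamentalMatrix φS A U ∧ GeneratedByFund k U) ∧
    IsSimpleDiffRing φS

/-- `Ri = R[i]`: the ring obtained from `R` by adjoining a square root `j` of `-1`,
free as an `R`-module with basis `1, j`. -/
def IsAdjoinI (R : Type*) [CommRing R] (Ri : Type*) [CommRing Ri] [Algebra R Ri]
    (j : Ri) : Prop :=
  j ^ 2 = -1 ∧ ∀ y : Ri, ∃! p : R × R, y = algebraMap R Ri p.1 + algebraMap R Ri p.2 * j

end DifferenceAlgebra

open Ring in
theorem map_ringInverse_of_isUnit {M N F : Type*} [MonoidWithZero M] [MonoidWithZero N]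
    [FunLike F M N] [MonoidHomClass F M N] (f : F) {x : M} (hx : IsUnit x) :
    f x⁻¹ʳ = (f x)⁻¹ʳ := by
  obtain ⟨u, rfl⟩ := hx
  have hfu : f u = (Units.map (f : M →* N) u : N) := rfl
  rw [inverse_unit, hfu, inverse_unit]
  rfl

namespace DiffCompat

variable {k S : Type*} [CommRing k] [CommRing S] [Algebra k S] {φk : k ≃+* k} {φS : S ≃+* S}

theorem symm (h : DiffCompat S φk φS) : DiffCompat S φk.symm φS.symm := fun c =>
  φS.injective <| by rw [RingEquiv.apply_symm_apply, h, RingEquiv.apply_symm_apply]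

theorem trans {T : Type*} [CommRing T] [Algebra S T] [Algebra k T] [IsScalarTower k S T]
    {φT : T ≃+* T} (hS : DiffCompat S φk φS) (hT : DiffCompat T φS φT) :
    DiffCompat T φk φT := fun c => by
  rw [IsScalarTower.algebraMap_apply k S T, IsScalarTower.algebraMap_apply k S T, hT, hS]

theorem map_mem_adjoin {s : Set S} (h : DiffCompat S φk φS) (hs : ∀ x ∈ s, φS x = x)
    {y : S} (hy : y ∈ Algebra.adjoin k s) : φS y ∈ Algebra.adjoin k s := by
  induction hy using Algebra.adjoin_induction with
  | mem x hx => rw [hs x hx]; exact Algebra.subset_adjoin hx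
  | algebraMap c => rw [h]; exact Subalgebra.algebraMap_mem _ _
  | add x y _ _ hx hy => rw [map_add]; exact add_mem hx hy
  | mul x y _ _ hx hy => rw [map_mul]; exact mul_mem hx hy

theorem map_mem_adjoin_iff {s : Set S} (h : DiffCompat S φk φS) (hs : ∀ x ∈ s, φS x = x)
    (y : S) : φS y ∈ Algebra.adjoin k s ↔ y ∈ Algebra.adjoin k s := by
  refine ⟨fun hy => ?_, h.map_mem_adjoin hs⟩
  have hs' : ∀ x ∈ s, φS.symm x = x := fun x hx => φS.symm_apply_eq.mpr (hs x hx).symm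
  simpa using h.symm.map_mem_adjoin hs' hy

end DiffCompat

theorem IsFundamentalMatrix.map {k S T : Type*} [CommRing k] [CommRing S] [CommRing T]
    [Algebra k S] [Algebra S T] [Algebra k T] [IsScalarTower k S T]
    {φS : S ≃+* S} {φT : T ≃+* T} {n : ℕ} {A : Matrix (Fin n) (Fin n) k}
    {U : Matrix (Fin n) (Fin n) S} (hU : IsFundamentalMatrix φS A U)
    (hT : DiffCompat T φS φT) : IsFundamentalMatrix φT A (U.map (algebraMap S T)) := by
  refine ⟨?_, ?_⟩
  · rw [← RingHom.mapMatrix_apply, ← RingHom.map_det]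
    exact hU.1.map _
  · have hφ : (U.map (algebraMap S T)).map φT = (U.map φS).map (algebraMap S T) := by
      ext p q
      exact hT _
    rw [hφ, hU.2, Matrix.map_mul, Matrix.map_map, IsScalarTower.algebraMap_eq k S T,
      RingHom.coe_comp]

theorem IsDiffIdeal.comap {R S : Type*} [CommRing R] [CommRing S] [Algebra R S]
    {φR : R ≃+* R} {φS : S ≃+* S} {I : Ideal S} (hI : IsDiffIdeal φS I)
    (h : DiffCompat S φR φS) : IsDiffIdeal φR (I.comap (algebraMap R S)) := fun a ha => by
  rw [Ideal.mem_comap, ← h]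
  exact hI _ ha

section RealPart

variable {R Ri : Type*} [CommRing R] [CommRing Ri] [Algebra R Ri]

variable (R) in
def realPartIdeal (j : Ri) (I : Ideal Ri) : Ideal R where
  carrier := {a | ∃ b : R, algebraMap R Ri a + algebraMap R Ri b * j ∈ I}
  zero_mem' := ⟨0, by simp⟩
  add_mem' := fun ⟨b₁, h₁⟩ ⟨b₂, h₂⟩ => ⟨b₁ + b₂, by
    simpa only [map_add, add_mul, add_add_add_comm] using I.add_mem h₁ h₂⟩
  smul_mem' := fun r _ ⟨b, h⟩ => ⟨r * b, by
    simpa only [smul_eq_mul, map_mul, mul_add, mul_assoc] using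
      I.mul_mem_left (algebraMap R Ri r) h⟩

theorem IsDiffIdeal.realPartIdeal {φR : R ≃+* R} {φi : Ri ≃+* Ri} {j : Ri} {I : Ideal Ri}
    (hI : IsDiffIdeal φi I) (h : DiffCompat Ri φR φi) (hj : φi j = j) :
    IsDiffIdeal φR (realPartIdeal R j I) := fun _ ⟨b, hb⟩ => ⟨φR b, by
  rw [← h, ← h, ← hj, ← map_mul, ← map_add]
  exact hI _ hb⟩

namespace IsAdjoinI

variable {j : Ri} (h : IsAdjoinI R Ri j)
include h

theorem eq_bot_of_realPartIdeal_eq_bot {I : Ideal Ri} (hI : realPartIdeal R j I = ⊥) :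
    I = ⊥ := by
  refine (Submodule.eq_bot_iff _).mpr fun x hx => ?_
  obtain ⟨⟨a, b⟩, rfl, -⟩ := h.2 x
  have ha : a ∈ realPartIdeal R j I := ⟨b, hx⟩
  -- multiplying by `j` moves `b` into the real part
  have hb : -b ∈ realPartIdeal R j I := ⟨a, by
    convert I.mul_mem_right j hx using 1
    simp only [map_neg]
    linear_combination (-algebraMap R Ri b) * h.1⟩
  rw [hI, Ideal.mem_bot] at ha hb
  simp [ha, neg_eq_zero.mp hb]

theorem isSimpleDiffRing {φR : R ≃+* R} {φi : Ri ≃+* Ri} (hR : IsSimpleDiffRing φR)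
    (hcompat : DiffCompat Ri φR φi) (hj : φi j = j) (hnoi : ∀ y : R, y ^ 2 + 1 ≠ 0) :
    IsSimpleDiffRing φi := by
  intro I hI
  refine or_iff_not_imp_left.mpr fun hIbot => ?_
  obtain ⟨b, hb⟩ : (1 : R) ∈ realPartIdeal R j I := by
    rcases hR _ (hI.realPartIdeal hcompat hj) with hbot | htop
    · exact absurd (h.eq_bot_of_realPartIdeal_eq_bot hbot) hIbot
    · exact htop ▸ Submodule.mem_top
  have hnorm : algebraMap R Ri (b ^ 2 + 1) ∈ I := by
    convert I.mul_mem_right (1 - algebraMap R Ri b * j) hb using 1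
    simp only [map_add, map_pow, map_one]
    linear_combination (algebraMap R Ri b) ^ 2 * h.1
  rcases hR _ (hI.comap hcompat) with hK | hK
  · have hK' : b ^ 2 + 1 ∈ I.comap (algebraMap R Ri) := hnorm
    rw [hK, Ideal.mem_bot] at hK'
    exact absurd hK' (hnoi b)
  · rw [Ideal.eq_top_iff_one, ← map_one (algebraMap R Ri), ← Ideal.mem_comap, hK]
    exact Submodule.mem_top

theorem subalgebra_eq_top {k : Type*} [CommSemiring k] [Algebra k Ri] {B : Subalgebra k Ri}
    (hR : ∀ r, algebraMap R Ri r ∈ B) (hj : j ∈ B) : B = ⊤ := by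
  refine eq_top_iff.mpr fun y _ => ?_
  obtain ⟨⟨a, b⟩, rfl, -⟩ := h.2 y
  exact add_mem (hR a) (mul_mem (hR b) hj)

theorem generatedByFund {k : Type*} [CommRing k] [Algebra k R] [Algebra k Ri]
    [IsScalarTower k R Ri] {n : ℕ} {U : Matrix (Fin n) (Fin n) R} (hdet : IsUnit U.det)
    (hU : GeneratedByFund k U) :
    GeneratedByFund (Algebra.adjoin k {j}) (U.map (algebraMap R Ri)) := by
  have hgens : (Set.range fun p : Fin n × Fin n => U.map (algebraMap R Ri) p.1 p.2) ∪
      {Ring.inverse (U.map (algebraMap R Ri)).det} = algebraMap R Ri ''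
      ((Set.range fun p : Fin n × Fin n => U p.1 p.2) ∪ {Ring.inverse U.det}) := by
    rw [Set.image_union, Set.image_singleton, ← Set.range_comp,
      map_ringInverse_of_isUnit _ hdet, RingHom.map_det]
    rfl
  unfold GeneratedByFund at hU ⊢
  apply Subalgebra.restrictScalars_injective k
  rw [← Algebra.adjoin_union_eq_adjoin_adjoin, Subalgebra.restrictScalars_top, hgens]
  refine h.subalgebra_eq_top (fun r => ?_) (Algebra.subset_adjoin (Or.inl rfl))
  refine Algebra.adjoin_mono Set.subset_union_right ?_
  rw [Algebra.adjoin_algebraMap, hU]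
  exact ⟨r, trivial, rfl⟩

end IsAdjoinI

end RealPart

theorem statement0_general
    {k : Type u} [Field k] (φk : k ≃+* k)
    {n : ℕ} (A : Matrix (Fin n) (Fin n) k)
    (R : Type v) [CommRing R] [Algebra k R] (φR : R ≃+* R)
    (hPV : IsPicardVessiot k R φk φR A)
    (hnoi : ∀ y : R, y ^ 2 + 1 ≠ 0)
    (Ri : Type w) [CommRing Ri] [Algebra R Ri] [Algebra k Ri] [IsScalarTower k R Ri]
    (j : Ri) (hRi : IsAdjoinI R Ri j)
    (φi : Ri ≃+* Ri) (hcompat : DiffCompat Ri φR φi) (hφj : φi j = j) :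
    (∀ y : Ri, y ∈ Algebra.adjoin k ({j} : Set Ri) ↔ φi y ∈ Algebra.adjoin k ({j} : Set Ri)) ∧
    IsSimpleDiffRing φi ∧
    ∃ U : Matrix (Fin n) (Fin n) Ri, IsFundamentalMatrix φi A U ∧
      GeneratedByFund (↥(Algebra.adjoin k ({j} : Set Ri))) U := by
  obtain ⟨-, hR, ⟨U, hU, hUgen⟩, hsimple⟩ := hPV
  have hj : ∀ x ∈ ({j} : Set Ri), φi x = x := fun x hx => hx ▸ hφj
  exact ⟨fun y => ((hR.trans hcompat).map_mem_adjoin_iff hj y).symm,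
    hRi.isSimpleDiffRing hsimple hcompat hφj hnoi,
    U.map (algebraMap R Ri), hU.map hcompat, hRi.generatedByFund hU.1 hUgen⟩

/-- If `(R, φ)` is a Picard–Vessiot extension for `φ Y = A Y` over `(k, φ)` containing no
element `x` with `x² + 1 = 0`, then `(R[i], φ)` is a Picard–Vessiot extension for
`φ Y = A Y` over `(k[i], φ)`. -/
theorem statement0
    {k : Type u} [Field k] [CharZero k] (φk : k ≃+* k)
    (hk_real : IsRealRing k)
    (hC_rc : IsRealClosedField (↥(fixedSubfield φk)))
    {n : ℕ} (A : Matrix (Fin n) (Fin n) k) (hA : IsUnit A.det)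
    (R : Type v) [CommRing R] [Algebra k R] (φR : R ≃+* R)
    (hPV : IsPicardVessiot k R φk φR A)
    (hnoi : ∀ y : R, y ^ 2 + 1 ≠ 0)
    (Ri : Type w) [CommRing Ri] [Algebra R Ri] [Algebra k Ri] [IsScalarTower k R Ri]
    (j : Ri) (hRi : IsAdjoinI R Ri j)
    (φi : Ri ≃+* Ri) (hcompat : DiffCompat Ri φR φi) (hφj : φi j = j) :
    (∀ y : Ri, y ∈ Algebra.adjoin k ({j} : Set Ri) ↔ φi y ∈ Algebra.adjoin k ({j} : Set Ri)) ∧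
    IsSimpleDiffRing φi ∧
    ∃ U : Matrix (Fin n) (Fin n) Ri, IsFundamentalMatrix φi A U ∧
      GeneratedByFund (↥(Algebra.adjoin k ({j} : Set Ri))) U :=
  statement0_general φk A R φR hPV hnoi Ri j hRi φi hcompat hφj
end

section
/- Let (R, φ) be a Picard–Vessiot extension for the system φY = AY over (k, φ). Then there exist an idempotent e ∈ R and a positive integer t such that φ^t(e) = e, R is the internal direct sum R = ⊕_{j=0}^{t−1} φ^j(e)R, and for every 0 ≤ j ≤ t−1 the ring φ^j(e)R is an integral domain. -/
universe u v w x

open scoped TensorProduct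

/-! A Picard–Vessiot ring is a finitely generated `k`-algebra, hence Noetherian, so it has
finitely many minimal primes and `φ` permutes them; let `Q 0, …, Q (t-1)` be the orbit of one of
them, with `φ (Q i) = Q (i + 1)`. Both `⋂ᵢ Q i` and `∑ᵢ ⋂_{j ≠ i} Q j` are difference ideals; the
first lies in a prime and the second is nonzero (the `Q i` are pairwise incomparable primes), so
simplicity makes them `0` and `R`. Writing `1 = ∑ eᵢ` with `eᵢ ∈ ⋂_{j ≠ i} Q j` gives complete orthogonal
idempotents with `eᵢ R = ⋂_{j ≠ i} Q j`; uniqueness of this decomposition forces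
`φ (eᵢ) = eᵢ₊₁`, and `eᵢ R` is a domain because it meets the prime `Q i` only in `0`. -/

theorem CompleteOrthogonalIdempotents.existsUnique_sum_mem_span {R ι : Type*} [CommRing R]
    [Fintype ι] {e : ι → R} (he : CompleteOrthogonalIdempotents e) (y : R) :
    ∃! c : ι → R, (∀ i, c i ∈ Ideal.span {e i}) ∧ y = ∑ i, c i := by
  classical
  refine ⟨fun i => y * e i, ⟨fun i => Ideal.mul_mem_left _ _ (Ideal.mem_span_singleton_self _),
    by rw [← Finset.mul_sum, he.complete, mul_one]⟩, ?_⟩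
  rintro c ⟨hc, rfl⟩
  choose r hr using fun i => Ideal.mem_span_singleton'.mp (hc i)
  funext i
  simp only [← hr, Finset.sum_mul, mul_assoc, he.mul_eq, mul_ite, mul_zero,
    Finset.sum_ite_eq', Finset.mem_univ, if_true]

theorem Ideal.eq_zero_or_eq_zero_of_inf_eq_bot {R : Type*} [CommRing R] {I P : Ideal R}
    [P.IsPrime] (h : I ⊓ P = ⊥) {a b : R} (ha : a ∈ I) (hb : b ∈ I) (hab : a * b = 0) :
    a = 0 ∨ b = 0 := by
  have hmem : ∀ x ∈ I, x ∈ P → x = 0 := fun x hxI hxP =>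
    (Submodule.mem_bot R).mp (h ▸ ⟨hxI, hxP⟩)
  exact ((‹P.IsPrime›).mem_or_mem (hab ▸ P.zero_mem)).imp (hmem a ha) (hmem b hb)

section IInfExcept

variable {R : Type*} [CommRing R] {ι : Type*}

def Ideal.iInfExcept (Q : ι → Ideal R) (i : ι) : Ideal R := ⨅ (j) (_ : j ≠ i), Q j

namespace Ideal

variable {Q : ι → Ideal R} {i j : ι} {x y : R}

theorem mem_iInfExcept : x ∈ iInfExcept Q i ↔ ∀ j, j ≠ i → x ∈ Q j := by
  simp only [iInfExcept, Submodule.mem_iInf]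

theorem iInfExcept_inf_self : iInfExcept Q i ⊓ Q i = ⨅ j, Q j := by
  ext x
  simp only [Submodule.mem_inf, mem_iInfExcept, Submodule.mem_iInf]
  classical
  exact ⟨fun ⟨h, hi⟩ j => if hj : j = i then hj ▸ hi else h j hj, fun h => ⟨fun j _ => h j, h i⟩⟩

theorem mul_mem_iInf_of_mem_iInfExcept (hij : i ≠ j) (hx : x ∈ iInfExcept Q i)
    (hy : y ∈ iInfExcept Q j) : x * y ∈ ⨅ l, Q l := by
  classical
  refine Submodule.mem_iInf _ |>.mpr fun l => ?_
  by_cases hl : l = i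
  · exact mul_mem_left _ _ (mem_iInfExcept.mp hy l (hl ▸ hij))
  · exact mul_mem_right _ _ (mem_iInfExcept.mp hx l hl)

theorem iInfExcept_not_le [Fintype ι] (hQ : ∀ i, (Q i).IsPrime) (hinc : ∀ i j, Q i ≤ Q j → i = j) :
    ¬ iInfExcept Q i ≤ Q i := by
  classical
  intro h
  have hle : (Finset.univ.erase i).inf Q ≤ iInfExcept Q i :=
    le_iInf₂ fun j hj => Finset.inf_le (Finset.mem_erase.mpr ⟨hj, Finset.mem_univ j⟩)
  obtain ⟨j, hj, hle⟩ := (hQ i).inf_le'.mp (hle.trans h)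
  exact (Finset.mem_erase.mp hj).1 (hinc j i hle)

theorem mul_eq_zero_of_mem_iInfExcept (hQ : ⨅ j, Q j = ⊥) (hij : i ≠ j) (hx : x ∈ iInfExcept Q i)
    (hy : y ∈ iInfExcept Q j) : x * y = 0 := by
  simpa [hQ] using mul_mem_iInf_of_mem_iInfExcept hij hx hy

variable [Fintype ι] {e : ι → R}

theorem exists_sum_eq_one_of_iSup_eq_top {I : ι → Ideal R} (h : ⨆ i, I i = ⊤) :
    ∃ e : ι → R, (∀ i, e i ∈ I i) ∧ ∑ i, e i = 1 := by
  obtain ⟨f, hf, hf1⟩ := (Submodule.mem_iSup_iff_exists_finsupp I 1).mp (h ▸ Submodule.mem_top)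
  exact ⟨f, hf, by rw [← hf1, Finsupp.sum_fintype _ _ fun _ => rfl]⟩

theorem mul_eq_self_of_mem_iInfExcept (hQ : ⨅ j, Q j = ⊥) (he : ∀ j, e j ∈ iInfExcept Q j)
    (hsum : ∑ j, e j = 1) (hx : x ∈ iInfExcept Q i) : x * e i = x := by
  classical
  calc x * e i = ∑ j, x * e j := (Finset.sum_eq_single i
        (fun j _ hji => mul_eq_zero_of_mem_iInfExcept hQ (Ne.symm hji) hx (he j))
        (fun h => absurd (Finset.mem_univ i) h)).symm
    _ = x := by rw [← Finset.mul_sum, hsum, mul_one]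

theorem completeOrthogonalIdempotents_of_mem_iInfExcept (hQ : ⨅ j, Q j = ⊥)
    (he : ∀ j, e j ∈ iInfExcept Q j) (hsum : ∑ j, e j = 1) : CompleteOrthogonalIdempotents e :=
  CompleteOrthogonalIdempotents.iff_ortho_complete.mpr
    ⟨fun i j hij => mul_eq_zero_of_mem_iInfExcept hQ hij (he i) (he j), hsum⟩

theorem span_singleton_eq_iInfExcept (hQ : ⨅ j, Q j = ⊥) (he : ∀ j, e j ∈ iInfExcept Q j)
    (hsum : ∑ j, e j = 1) (i : ι) : span {e i} = iInfExcept Q i :=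
  le_antisymm ((span_singleton_le_iff_mem _).mpr (he i)) fun _ hx =>
    mem_span_singleton'.mpr ⟨_, mul_eq_self_of_mem_iInfExcept hQ he hsum hx⟩

theorem eq_of_mem_iInfExcept (hQ : ⨅ j, Q j = ⊥) {e' : ι → R}
    (he : ∀ j, e j ∈ iInfExcept Q j) (hsum : ∑ j, e j = 1)
    (he' : ∀ j, e' j ∈ iInfExcept Q j) (hsum' : ∑ j, e' j = 1) : e = e' :=
  funext fun i => calc
    e i = e i * e' i := (mul_eq_self_of_mem_iInfExcept hQ he' hsum' (he i)).symm
    _ = e' i * e i := mul_comm _ _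
    _ = e' i := mul_eq_self_of_mem_iInfExcept hQ he hsum (he' i)

end Ideal

end IInfExcept

section EquivariantFamily

open Ideal

variable {R : Type*} [CommRing R] {φ : R ≃+* R} {ι : Type*} {τ : Equiv.Perm ι}
  {Q : ι → Ideal R}

theorem map_mem_of_comap_eq (hQ : ∀ i, (Q (τ i)).comap φ = Q i) {i : ι} {x : R} (hx : x ∈ Q i) :
    φ x ∈ Q (τ i) := by
  rwa [← hQ i, mem_comap] at hx

theorem map_mem_iInfExcept_of_comap_eq (hQ : ∀ i, (Q (τ i)).comap φ = Q i) {i : ι} {x : R}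
    (hx : x ∈ iInfExcept Q i) : φ x ∈ iInfExcept Q (τ i) := by
  refine mem_iInfExcept.mpr fun j hj => ?_
  have hj' : τ.symm j ≠ i := fun h => hj (h ▸ τ.apply_symm_apply j).symm
  simpa using map_mem_of_comap_eq hQ (mem_iInfExcept.mp hx _ hj')

theorem isDiffIdeal_iInf_of_comap_eq (hQ : ∀ i, (Q (τ i)).comap φ = Q i) :
    IsDiffIdeal φ (⨅ i, Q i) := fun x hx =>
  Submodule.mem_iInf _ |>.mpr fun j => by
    simpa using map_mem_of_comap_eq hQ ((Submodule.mem_iInf _).mp hx (τ.symm j))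

theorem isDiffIdeal_iSup_iInfExcept_of_comap_eq (hQ : ∀ i, (Q (τ i)).comap φ = Q i) :
    IsDiffIdeal φ (⨆ i, iInfExcept Q i) := by
  have hle : ⨆ i, iInfExcept Q i ≤ (⨆ i, iInfExcept Q i).comap φ := iSup_le fun i _ hx =>
    mem_comap.mpr (Submodule.mem_iSup_of_mem (τ i) (map_mem_iInfExcept_of_comap_eq hQ hx))
  exact fun _ hx => hle hx

namespace IsSimpleDiffRing

theorem iInf_eq_bot_of_comap_eq (hs : IsSimpleDiffRing φ) (hQ : ∀ i, (Q (τ i)).comap φ = Q i)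
    {i : ι} (hi : Q i ≠ ⊤) : ⨅ j, Q j = ⊥ :=
  (hs _ (isDiffIdeal_iInf_of_comap_eq hQ)).resolve_right fun h =>
    hi (top_le_iff.mp (h ▸ iInf_le Q i))

theorem iSup_iInfExcept_eq_top_of_comap_eq (hs : IsSimpleDiffRing φ)
    (hQ : ∀ i, (Q (τ i)).comap φ = Q i) {i : ι} (hi : iInfExcept Q i ≠ ⊥) :
    ⨆ j, iInfExcept Q j = ⊤ :=
  (hs _ (isDiffIdeal_iSup_iInfExcept_of_comap_eq hQ)).resolve_left fun h =>
    hi (le_bot_iff.mp (h ▸ le_iSup (iInfExcept Q) i))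

theorem exists_completeOrthogonalIdempotents_of_comap_eq [Fintype ι] [Nonempty ι]
    (hs : IsSimpleDiffRing φ) (hQ : ∀ i, (Q (τ i)).comap φ = Q i)
    (hprime : ∀ i, (Q i).IsPrime) (hinc : ∀ i j, Q i ≤ Q j → i = j) :
    ∃ e : ι → R, CompleteOrthogonalIdempotents e ∧ (∀ i, φ (e i) = e (τ i)) ∧
      ∀ i, e i ≠ 0 ∧ ∀ a b : R, a ∈ span {e i} → b ∈ span {e i} → a * b = 0 → a = 0 ∨ b = 0 := by
  obtain ⟨i₀⟩ := ‹Nonempty ι›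
  have hbot : ⨅ j, Q j = ⊥ := hs.iInf_eq_bot_of_comap_eq hQ (hprime i₀).ne_top
  have hne : ∀ i, iInfExcept Q i ≠ ⊥ := fun i h => iInfExcept_not_le hprime hinc (h ▸ bot_le)
  obtain ⟨e, he, hsum⟩ :=
    exists_sum_eq_one_of_iSup_eq_top (hs.iSup_iInfExcept_eq_top_of_comap_eq hQ (hne i₀))
  have hspan := span_singleton_eq_iInfExcept hbot he hsum
  have hshift : (fun j => φ (e (τ.symm j))) = e := by
    refine eq_of_mem_iInfExcept hbot (fun j => ?_) ?_ he hsum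
    · simpa using map_mem_iInfExcept_of_comap_eq hQ (he (τ.symm j))
    · rw [← map_sum, Equiv.sum_comp τ.symm e, hsum, map_one]
  refine ⟨e, completeOrthogonalIdempotents_of_mem_iInfExcept hbot he hsum,
    fun i => by simpa using congrFun hshift (τ i), fun i => ⟨fun h => hne i ?_, fun a b => ?_⟩⟩
  · rw [← hspan, h, span_singleton_eq_bot.mpr rfl]
  · have := hprime i
    exact eq_zero_or_eq_zero_of_inf_eq_bot (by rw [hspan, iInfExcept_inf_self, hbot])

end IsSimpleDiffRing

end EquivariantFamily

section MinimalPrimeOrbit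

open Function

variable {R : Type*} [CommRing R] (φ : R ≃+* R)

theorem comap_symm_mem_minimalPrimes {p : Ideal R} (hp : p ∈ minimalPrimes R) :
    p.comap φ.symm ∈ minimalPrimes R := by
  have := Ideal.minimalPrimes_comap_of_surjective (f := (φ.symm : R →+* R)) φ.symm.surjective hp
  rw [Ideal.comap_bot_of_injective (φ.symm : R →+* R) φ.symm.injective] at this
  exact this

theorem mem_periodicPts_comap_symm [IsNoetherianRing R] {p : Ideal R} (hp : p ∈ minimalPrimes R) :
    p ∈ periodicPts (Ideal.comap φ.symm) := by
  have hmaps : Set.MapsTo (Ideal.comap φ.symm) (minimalPrimes R) (minimalPrimes R) :=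
    fun _ => comap_symm_mem_minimalPrimes φ
  have := (minimalPrimes.finite_of_isNoetherianRing R).to_subtype
  have hinj : Injective hmaps.restrict :=
    hmaps.restrict_inj.mpr ((Ideal.comap_injective_of_surjective _ φ.symm.surjective).injOn)
  exact Semiconj.mapsTo_periodicPts (g := Subtype.val) (fun _ => rfl) (hinj.mem_periodicPts ⟨p, hp⟩)

theorem exists_minimalPrimes_orbit [IsNoetherianRing R] [Nontrivial R] :
    ∃ (t : ℕ) (Q : Fin (t + 1) → Ideal R), (∀ i, (Q i).IsPrime) ∧
      (∀ i j, Q i ≤ Q j → i = j) ∧ ∀ i, (Q (i + 1)).comap φ = Q i := by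
  set σ : Ideal R → Ideal R := Ideal.comap φ.symm
  obtain ⟨p, hp⟩ := Ideal.nonempty_minimalPrimes (I := (⊥ : Ideal R)) bot_ne_top
  have hper := mem_periodicPts_comap_symm φ hp
  obtain ⟨t, ht⟩ := Nat.exists_eq_succ_of_ne_zero (minimalPeriod_pos_of_mem_periodicPts hper).ne'
  have hmin : ∀ m, σ^[m] p ∈ minimalPrimes R := fun m =>
    (Set.MapsTo.iterate (fun _ => comap_symm_mem_minimalPrimes φ) m) hp
  have hsucc : ∀ i : Fin (t + 1), σ^[((i + 1 : Fin (t + 1)) : ℕ)] p = σ (σ^[i] p) := by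
    refine Fin.lastCases ?_ fun j => ?_
    · rw [Fin.last_add_one, Fin.val_zero, iterate_zero_apply, ← iterate_succ_apply' σ, Fin.val_last,
        ← ht, iterate_minimalPeriod]
    · rw [Fin.coeSucc_eq_succ, Fin.val_succ, Fin.val_castSucc, iterate_succ_apply']
  refine ⟨t, fun i => σ^[i] p, fun i => (hmin i).1.1, fun i j hij => ?_, fun i => ?_⟩
  · have heq : σ^[i] p = σ^[j] p := le_antisymm hij ((hmin j).2 (hmin i).1 hij)
    exact Fin.ext <| (iterate_eq_iterate_iff_of_lt_minimalPeriod (ht ▸ i.isLt)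
      (ht ▸ j.isLt)).mp heq
  · ext x
    simp [hsucc, σ, Ideal.mem_comap]

end MinimalPrimeOrbit

theorem IsSimpleDiffRing.exists_isIdempotentElem_decomposition {R : Type*} [CommRing R]
    [Nontrivial R] [IsNoetherianRing R] {φ : R ≃+* R} (hs : IsSimpleDiffRing φ) :
    ∃ (e : R) (t : ℕ), 0 < t ∧ IsIdempotentElem e ∧ (⇑φ)^[t] e = e ∧
      (∀ y : R, ∃! c : Fin t → R,
        (∀ i : Fin t, c i ∈ Ideal.span {(⇑φ)^[(i : ℕ)] e}) ∧ y = ∑ i, c i) ∧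
      (∀ i : Fin t, (⇑φ)^[(i : ℕ)] e ≠ 0 ∧
        ∀ a b : R, a ∈ Ideal.span {(⇑φ)^[(i : ℕ)] e} → b ∈ Ideal.span {(⇑φ)^[(i : ℕ)] e} →
          a * b = 0 → a = 0 ∨ b = 0) := by
  obtain ⟨t, Q, hprime, hinc, hQ⟩ := exists_minimalPrimes_orbit φ
  obtain ⟨e, he, hshift, hdomain⟩ :=
    hs.exists_completeOrthogonalIdempotents_of_comap_eq (τ := Equiv.addRight 1) hQ hprime hinc
  simp only [Equiv.coe_addRight] at hshift
  have hiter : ∀ i : Fin (t + 1), (⇑φ)^[(i : ℕ)] (e 0) = e i := by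
    refine Fin.induction rfl fun i ih => ?_
    rw [Fin.val_succ, Function.iterate_succ_apply', ← Fin.val_castSucc, ih, hshift,
      Fin.coeSucc_eq_succ]
  refine ⟨e 0, t + 1, t.succ_pos, he.idem 0, ?_, fun y => ?_, fun i => ?_⟩
  · rw [Function.iterate_succ_apply', show (⇑φ)^[t] (e 0) = e (Fin.last t) from hiter (Fin.last t),
      hshift, Fin.last_add_one]
  · simpa only [hiter] using he.existsUnique_sum_mem_span y
  · simpa only [hiter] using hdomain i

theorem GeneratedByFund.finiteType {k S : Type*} [CommSemiring k] [CommRing S] [Algebra k S]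
    {n : ℕ} {U : Matrix (Fin n) (Fin n) S} (h : GeneratedByFund k U) : Algebra.FiniteType k S :=
  ⟨((Set.finite_range _).union (Set.finite_singleton _)).toFinset, by
    rw [Set.Finite.coe_toFinset]; exact h⟩

theorem statement1_general
    {k : Type u} [Field k] (φk : k ≃+* k)
    {n : ℕ} (A : Matrix (Fin n) (Fin n) k)
    (R : Type v) [CommRing R] [Algebra k R] (φR : R ≃+* R)
    (hPV : IsPicardVessiot k R φk φR A) :
    ∃ (e : R) (t : ℕ), 0 < t ∧ IsIdempotentElem e ∧ (⇑φR)^[t] e = e ∧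
      (∀ y : R, ∃! c : Fin t → R,
        (∀ i : Fin t, c i ∈ Ideal.span {(⇑φR)^[(i : ℕ)] e}) ∧ y = ∑ i, c i) ∧
      (∀ i : Fin t, (⇑φR)^[(i : ℕ)] e ≠ 0 ∧
        ∀ a b : R, a ∈ Ideal.span {(⇑φR)^[(i : ℕ)] e} → b ∈ Ideal.span {(⇑φR)^[(i : ℕ)] e} →
          a * b = 0 → a = 0 ∨ b = 0) := by
  obtain ⟨_, -, ⟨U, -, hgen⟩, hsimple⟩ := hPV
  have := hgen.finiteType
  have : IsNoetherianRing R := Algebra.FiniteType.isNoetherianRing k R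
  exact hsimple.exists_isIdempotentElem_decomposition

/-- Any Picard–Vessiot extension decomposes as a finite direct sum
`R = ⊕_{j=0}^{t-1} φ^j(e) R` for some idempotent `e` with `φ^t(e) = e`,
where each `φ^j(e) R` is an integral domain. -/
theorem statement1
    {k : Type u} [Field k] [CharZero k] (φk : k ≃+* k)
    (hk_real : IsRealRing k)
    (hC_rc : IsRealClosedField (↥(fixedSubfield φk)))
    {n : ℕ} (A : Matrix (Fin n) (Fin n) k) (hA : IsUnit A.det)
    (R : Type v) [CommRing R] [Algebra k R] (φR : R ≃+* R)
    (hPV : IsPicardVessiot k R φk φR A) :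
    ∃ (e : R) (t : ℕ), 0 < t ∧ IsIdempotentElem e ∧ (⇑φR)^[t] e = e ∧
      (∀ y : R, ∃! c : Fin t → R,
        (∀ i : Fin t, c i ∈ Ideal.span {(⇑φR)^[(i : ℕ)] e}) ∧ y = ∑ i, c i) ∧
      (∀ i : Fin t, (⇑φR)^[(i : ℕ)] e ≠ 0 ∧
        ∀ a b : R, a ∈ Ideal.span {(⇑φR)^[(i : ℕ)] e} → b ∈ Ideal.span {(⇑φR)^[(i : ℕ)] e} →
          a * b = 0 → a = 0 ∨ b = 0) :=
  statement1_general φk A R φR hPV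
end

section
/- Let (R, φ) be a real Picard–Vessiot extension for the system φY = AY over (k, φ) with fundamental matrix U ∈ GL_n(R), let K be the total ring of fractions of R, let G be the real difference Galois group (the restrictions to R of the difference ring automorphisms of R[i] fixing k[i] pointwise), and let G_{K[i]} be the group of difference ring automorphisms of K[i] fixing k[i] pointwise. Then {U⁻¹ψ(U) : ψ ∈ G} = {U⁻¹ψ(U) : ψ ∈ G_{K[i]}} as subsets of GL_n(C[i]). -/
universe u v w x

open scoped TensorProduct

/-!
A difference automorphism of `R[i]` preserves non-zero-divisors, so it extends to the total ring
of fractions `K[i]` of `R[i]`; the extension is again a difference automorphism over `k[i]`.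
Conversely, let `Ψ` be a difference automorphism of `K[i]` over `k[i]`. Both `U` and `Ψ(U)` are
fundamental matrices, so `M = U⁻¹Ψ(U)` is a matrix of constants of `K[i]`. The constants of `K`
lie in `R`, because the ideal of denominators of a constant is a difference ideal of the simple
difference ring `R`; hence the constants of `K[i]` lie in `R[i]`. So `Ψ(U) = UM` and
`Ψ(det U⁻¹) = det U⁻¹ · det M⁻¹` lie in `R[i]`, and `Ψ` (as well as `Ψ⁻¹`) restricts to `R[i]`.
In both directions the two automorphisms agree on `U`.
-/

open scoped nonZeroDivisors

namespace IsAdjoinI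

variable {R Ri : Type*} [CommRing R] [CommRing Ri] [Algebra R Ri] {j : Ri}

theorem eq_of_add_mul_eq (h : IsAdjoinI R Ri j) {a b c d : R}
    (heq : algebraMap R Ri a + algebraMap R Ri b * j
      = algebraMap R Ri c + algebraMap R Ri d * j) :
    a = c ∧ b = d := by
  obtain ⟨p, -, hp⟩ := h.2 (algebraMap R Ri a + algebraMap R Ri b * j)
  exact Prod.ext_iff.mp ((hp (a, b) rfl).trans (hp (c, d) heq).symm)

theorem eq_zero_of_add_mul_eq_zero (h : IsAdjoinI R Ri j) {a b : R}
    (heq : algebraMap R Ri a + algebraMap R Ri b * j = 0) : a = 0 ∧ b = 0 :=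
  h.eq_of_add_mul_eq (by rw [heq, map_zero, zero_mul, add_zero])

theorem algebraMap_injective (h : IsAdjoinI R Ri j) : Function.Injective (algebraMap R Ri) :=
  fun a b hab => (h.eq_of_add_mul_eq (b := 0) (d := 0) (by rw [hab])).1

theorem algebraMap_mem_nonZeroDivisors (h : IsAdjoinI R Ri j) {r : R} (hr : r ∈ R⁰) :
    algebraMap R Ri r ∈ Ri⁰ := by
  refine mem_nonZeroDivisors_iff_right.mpr fun y hy => ?_
  obtain ⟨⟨a, b⟩, rfl, -⟩ := h.2 y
  obtain ⟨ha, hb⟩ := h.eq_zero_of_add_mul_eq_zero (a := a * r) (b := b * r) (by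
    simp only [map_mul]
    linear_combination hy)
  simp [(mul_right_mem_nonZeroDivisors_eq_zero_iff hr).mp ha,
    (mul_right_mem_nonZeroDivisors_eq_zero_iff hr).mp hb]

theorem isUnit_of_mem_nonZeroDivisors (h : IsAdjoinI R Ri j) (hR : R⁰ ≤ IsUnit.submonoid R)
    {x : Ri} (hx : x ∈ Ri⁰) : IsUnit x := by
  obtain ⟨⟨a, b⟩, rfl, -⟩ := h.2 x
  set conj := algebraMap R Ri a - algebraMap R Ri b * j
  have hnorm : (algebraMap R Ri a + algebraMap R Ri b * j) * conj
      = algebraMap R Ri (a ^ 2 + b ^ 2) := by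
    simp only [conj, map_add, map_pow]
    linear_combination (-(algebraMap R Ri b) ^ 2) * h.1
  have hnorm_mem : a ^ 2 + b ^ 2 ∈ R⁰ := by
    refine mem_nonZeroDivisors_iff_right.mpr fun c hc => ?_
    have hconj : algebraMap R Ri c * conj = 0 := by
      refine (mul_right_mem_nonZeroDivisors_eq_zero_iff hx).mp ?_
      rw [mul_assoc, mul_comm conj, hnorm, ← map_mul, hc, map_zero]
    obtain ⟨hca, hcb⟩ := h.eq_zero_of_add_mul_eq_zero (a := c * a) (b := -(c * b)) (by
      simp only [map_mul, map_neg]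
      linear_combination hconj)
    refine h.algebraMap_injective ?_
    rw [map_zero, ← mul_right_mem_nonZeroDivisors_eq_zero_iff hx, mul_add, ← mul_assoc,
      ← map_mul, ← map_mul, hca, neg_eq_zero.mp hcb, map_zero]
    ring
  exact isUnit_of_mul_isUnit_left (hnorm ▸ (hR hnorm_mem).map (algebraMap R Ri))

end IsAdjoinI

theorem IsSimpleDiffRing.exists_algebraMap_eq_of_fixed {R K : Type*} [CommRing R] [Nontrivial R]
    [CommRing K] [Algebra R K] [IsFractionRing R K] {φR : R ≃+* R} (hR : IsSimpleDiffRing φR)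
    {φK : K ≃+* K} (hK : DiffCompat K φR φK) {a : K} (ha : φK a = a) :
    ∃ r : R, algebraMap R K r = a := by
  -- the ideal of denominators of `a`
  set I : Ideal R := (1 : Submodule R K).colon {a}
  have hI : IsDiffIdeal φR I := by
    intro s hs
    obtain ⟨r, hr⟩ := Submodule.mem_one.mp (Submodule.mem_colon_singleton.mp hs)
    refine Submodule.mem_colon_singleton.mpr (Submodule.mem_one.mpr ⟨φR r, ?_⟩)
    rw [Algebra.smul_def, ← hK, ← hK, hr, Algebra.smul_def, map_mul, ha]
  obtain ⟨⟨r, s⟩, hrs⟩ := IsLocalization.surj R⁰ a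
  have hsI : (s : R) ∈ I := Submodule.mem_colon_singleton.mpr
    (Submodule.mem_one.mpr ⟨r, by rw [Algebra.smul_def, mul_comm]; exact hrs.symm⟩)
  rcases hR I hI with hbot | htop
  · exact absurd (Ideal.mem_bot.mp (hbot ▸ hsI)) (nonZeroDivisors.ne_zero s.2)
  · simpa using Submodule.mem_colon_singleton.mp (htop ▸ Submodule.mem_top : (1 : R) ∈ I)

theorem IsFractionRing.exists_ringEquiv_extension {A L : Type*} [CommRing A] [CommRing L]
    [Algebra A L] [IsFractionRing A L] (ψ : A ≃+* A) :
    ∃ Ψ : L ≃+* L, ∀ a, Ψ (algebraMap A L a) = algebraMap A L (ψ a) :=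
  ⟨IsLocalization.ringEquivOfRingEquiv L L ψ (MulEquivClass.map_nonZeroDivisors ψ),
    IsLocalization.ringEquivOfRingEquiv_eq _⟩

theorem IsFractionRing.commute_iff_of_extension {A L : Type*} [CommRing A] [CommRing L]
    [Algebra A L] [IsFractionRing A L] {ψ φA : A ≃+* A} {Ψ φL : L ≃+* L}
    (hφ : ∀ a, algebraMap A L (φA a) = φL (algebraMap A L a))
    (hΨ : ∀ a, Ψ (algebraMap A L a) = algebraMap A L (ψ a)) :
    (∀ a, ψ (φA a) = φA (ψ a)) ↔ ∀ x, Ψ (φL x) = φL (Ψ x) := by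
  constructor
  · intro h
    have hext : (Ψ.toRingHom.comp φL.toRingHom).comp (algebraMap A L)
        = (φL.toRingHom.comp Ψ.toRingHom).comp (algebraMap A L) := by
      ext a
      simp only [RingHom.coe_comp, Function.comp_apply, RingEquiv.toRingHom_eq_coe,
        RingEquiv.coe_toRingHom]
      rw [← hφ, hΨ, h, hφ, hΨ]
    exact RingHom.congr_fun (IsLocalization.ringHom_ext A⁰ hext)
  · intro h a
    apply IsFractionRing.injective A L
    rw [← hΨ, hφ, h, hΨ, hφ]

theorem RingEquiv.exists_restriction_of_mapsTo_range {A B : Type*} [CommRing A] [CommRing B]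
    {ι : A →+* B} (hι : Function.Injective ι) (Θ : B ≃+* B) (hΘ : ∀ a, Θ (ι a) ∈ ι.range)
    (hΘsymm : ∀ a, Θ.symm (ι a) ∈ ι.range) : ∃ ψ : A ≃+* A, ∀ a, Θ (ι a) = ι (ψ a) := by
  have hrange : ∀ x, x ∈ ι.range ↔ Θ x ∈ ι.range := by
    intro x
    constructor
    · rintro ⟨a, rfl⟩
      exact hΘ a
    · rintro ⟨a, ha⟩
      rw [← Θ.symm_apply_apply x, ← ha]
      exact hΘsymm a
  let e : A ≃+* ι.range := RingEquiv.ofLeftInverse (Function.leftInverse_invFun hι)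
  refine ⟨e.trans ((Θ.restrict _ _ hrange).trans e.symm), fun a => ?_⟩
  have he : ∀ y, ι (e.symm y) = y := fun y => congrArg Subtype.val (e.apply_symm_apply y)
  rw [RingEquiv.trans_apply, RingEquiv.trans_apply, he]
  rfl

theorem Matrix.map_nonsing_inv_mul_eq_self {m S : Type*} [Fintype m] [DecidableEq m]
    [CommRing S] (f : S →+* S) {B V W : Matrix m m S} (hV : V.map f = B * V)
    (hW : W.map f = B * W) (hVdet : IsUnit V.det) : (V⁻¹ * W).map f = V⁻¹ * W := by
  have hWV : W = V * (V⁻¹ * W) := (Matrix.mul_nonsing_inv_cancel_left _ _ hVdet).symm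
  have hfV : IsUnit (V.map f) := by
    rw [Matrix.isUnit_iff_isUnit_det, ← RingHom.mapMatrix_apply, ← RingHom.map_det]
    exact hVdet.map f
  apply hfV.mul_left_cancel
  rw [← Matrix.map_mul, ← hWV, hW, hV, Matrix.mul_assoc, ← hWV]

namespace IsFundamentalMatrix

variable {k R T : Type*} [CommRing k] [CommRing R] [Algebra k R] [CommRing T]
  {φR : R ≃+* R} {φT : T ≃+* T} {n : ℕ} {A : Matrix (Fin n) (Fin n) k}
  {U : Matrix (Fin n) (Fin n) R}

theorem map_map_eq_mul (hU : IsFundamentalMatrix φR A U) (f : R →+* T)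
    (hf : ∀ r, f (φR r) = φT (f r)) :
    (U.map f).map φT = A.map (f ∘ algebraMap k R) * U.map f := by
  have hcomm : ⇑φT ∘ ⇑f = ⇑f ∘ ⇑φR := funext fun r => (hf r).symm
  rw [Matrix.map_map, hcomm, ← Matrix.map_map, hU.2, Matrix.map_mul, Matrix.map_map]

/-- `Θ (g U) = g U * M` with `M` a matrix of constants, so `Θ` maps `g R` into any subring
containing `g R` and the constants. -/
theorem map_mem_of_generatedByFund (hU : IsFundamentalMatrix φR A U)
    (hUgen : GeneratedByFund k U) (g : R →+* T) (hg : ∀ r, g (φR r) = φT (g r))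
    {S : Subring T} (hgS : ∀ r, g r ∈ S) (hconst : ∀ t, φT t = t → t ∈ S)
    {Θ : T ≃+* T} (hΘ : ∀ t, Θ (φT t) = φT (Θ t))
    (hΘk : ∀ c, Θ (g (algebraMap k R c)) = g (algebraMap k R c)) (r : R) : Θ (g r) ∈ S := by
  set h : R →+* T := Θ.toRingHom.comp g
  have hh : ∀ r, h (φR r) = φT (h r) := fun r => by simp [h, hg, hΘ]
  have hgdet : IsUnit (U.map g).det := by
    rw [← RingHom.mapMatrix_apply, ← RingHom.map_det]
    exact hU.1.map g
  set M := (U.map g)⁻¹ * U.map h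
  have hMconst : M.map φT = M := by
    refine Matrix.map_nonsing_inv_mul_eq_self (φT : T →+* T) (hU.map_map_eq_mul g hg)
      ((hU.map_map_eq_mul h hh).trans ?_) hgdet
    congr 2
    exact funext hΘk
  have hUh : U.map h = U.map g * M := (Matrix.mul_nonsing_inv_cancel_left _ _ hgdet).symm
  have hdet : h U.det = g U.det * M.det := by
    rw [RingHom.map_det, RingHom.map_det, RingHom.mapMatrix_apply, RingHom.mapMatrix_apply, hUh,
      Matrix.det_mul]
  have hMdet : IsUnit M.det := isUnit_of_mul_isUnit_right (hdet ▸ hU.1.map h)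
  have hMS : ∀ p q, M p q ∈ S := fun p q => hconst _ (congrFun (congrFun hMconst p) q)
  have hMinvS : Ring.inverse M.det ∈ S := by
    have hMdet_const : φT M.det = M.det := by
      rw [RingEquiv.map_det]
      exact congrArg Matrix.det hMconst
    refine hconst _ (left_inv_eq_right_inv (a := M.det) ?_ (Ring.mul_inverse_cancel _ hMdet))
    calc φT (Ring.inverse M.det) * M.det = φT (Ring.inverse M.det * M.det) := by
          rw [map_mul, hMdet_const]
      _ = 1 := by rw [Ring.inverse_mul_cancel _ hMdet, map_one]
  have hinv : h (Ring.inverse U.det) = g (Ring.inverse U.det) * Ring.inverse M.det := by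
    refine left_inv_eq_right_inv (a := h U.det) ?_ ?_
    · rw [← map_mul, Ring.inverse_mul_cancel _ hU.1, map_one]
    · rw [hdet, mul_mul_mul_comm, ← map_mul, Ring.mul_inverse_cancel _ hU.1, map_one,
        Ring.mul_inverse_cancel _ hMdet, one_mul]
  have hr : r ∈ Algebra.adjoin k
      ((Set.range fun p : Fin n × Fin n => U p.1 p.2) ∪ {Ring.inverse U.det}) := by
    rw [hUgen]
    trivial
  show h r ∈ S
  induction hr using Algebra.adjoin_induction with
  | mem x hx =>
    rcases hx with ⟨⟨p, q⟩, rfl⟩ | rfl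
    · have hentry : h (U p q) = (U.map g * M) p q := by rw [← hUh]; rfl
      rw [hentry, Matrix.mul_apply]
      exact sum_mem fun l _ => mul_mem (hgS _) (hMS l q)
    · rw [hinv]
      exact mul_mem (hgS _) hMinvS
  | algebraMap c => exact (hΘk c).symm ▸ hgS _
  | add x y _ _ hx hy => exact (map_add h x y).symm ▸ add_mem hx hy
  | mul x y _ _ hx hy => exact (map_mul h x y).symm ▸ mul_mem hx hy

end IsFundamentalMatrix

section FractionRing

variable {R K Ri Ki : Type*} [CommRing R] [CommRing K] [CommRing Ri] [CommRing Ki]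
  [Algebra R K] [Algebra R Ri] [Algebra K Ki] [Algebra Ri Ki] {j : Ri} {jK : Ki}

theorem IsAdjoinI.algebraMap_add_mul
    (hR : ∀ r : R, algebraMap Ri Ki (algebraMap R Ri r) = algebraMap K Ki (algebraMap R K r))
    (hj : algebraMap Ri Ki j = jK) (a b : R) :
    algebraMap Ri Ki (algebraMap R Ri a + algebraMap R Ri b * j)
      = algebraMap K Ki (algebraMap R K a) + algebraMap K Ki (algebraMap R K b) * jK := by
  rw [map_add, map_mul, hR, hR, hj]

theorem IsAdjoinI.algebraMap_injective_of_isFractionRing [IsFractionRing R K]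
    (hRi : IsAdjoinI R Ri j) (hKi : IsAdjoinI K Ki jK)
    (hR : ∀ r : R, algebraMap Ri Ki (algebraMap R Ri r) = algebraMap K Ki (algebraMap R K r))
    (hj : algebraMap Ri Ki j = jK) : Function.Injective (algebraMap Ri Ki) := by
  intro x y hxy
  obtain ⟨⟨a, b⟩, rfl, -⟩ := hRi.2 x
  obtain ⟨⟨c, d⟩, rfl, -⟩ := hRi.2 y
  rw [IsAdjoinI.algebraMap_add_mul hR hj, IsAdjoinI.algebraMap_add_mul hR hj] at hxy
  obtain ⟨hac, hbd⟩ := hKi.eq_of_add_mul_eq hxy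
  rw [IsFractionRing.injective R K hac, IsFractionRing.injective R K hbd]

theorem IsAdjoinI.exists_mul_eq_algebraMap [IsFractionRing R K] (hKi : IsAdjoinI K Ki jK)
    (hR : ∀ r : R, algebraMap Ri Ki (algebraMap R Ri r) = algebraMap K Ki (algebraMap R K r))
    (hj : algebraMap Ri Ki j = jK) (z : Ki) :
    ∃ s ∈ R⁰, ∃ w : Ri, z * algebraMap K Ki (algebraMap R K s) = algebraMap Ri Ki w := by
  obtain ⟨⟨a, b⟩, rfl, -⟩ := hKi.2 z
  obtain ⟨s, hs⟩ := IsLocalization.exist_integer_multiples R⁰ Finset.univ ![a, b]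
  obtain ⟨a', ha'⟩ := hs 0 (Finset.mem_univ _)
  obtain ⟨b', hb'⟩ := hs 1 (Finset.mem_univ _)
  refine ⟨s, s.2, algebraMap R Ri a' + algebraMap R Ri b' * j, ?_⟩
  simp only [Matrix.cons_val_zero, Matrix.cons_val_one, Algebra.smul_def] at ha' hb'
  rw [IsAdjoinI.algebraMap_add_mul hR hj, ha', hb']
  simp only [map_mul]
  ring

theorem IsAdjoinI.algebraMap_mem_nonZeroDivisors_of_isFractionRing [IsFractionRing R K]
    (hRi : IsAdjoinI R Ri j) (hKi : IsAdjoinI K Ki jK)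
    (hR : ∀ r : R, algebraMap Ri Ki (algebraMap R Ri r) = algebraMap K Ki (algebraMap R K r))
    (hj : algebraMap Ri Ki j = jK) {x : Ri} (hx : x ∈ Ri⁰) : algebraMap Ri Ki x ∈ Ki⁰ := by
  refine mem_nonZeroDivisors_iff_right.mpr fun z hz => ?_
  obtain ⟨s, hs, w, hw⟩ := hKi.exists_mul_eq_algebraMap hR hj z
  have hwx : w * x = 0 := by
    refine hRi.algebraMap_injective_of_isFractionRing hKi hR hj ?_
    rw [map_mul, ← hw, map_zero, mul_right_comm, hz, zero_mul]
  have hs_unit : IsUnit (algebraMap K Ki (algebraMap R K s)) :=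
    (IsLocalization.map_units K ⟨s, hs⟩).map (algebraMap K Ki)
  rw [← hs_unit.mul_left_eq_zero, hw, (mul_right_mem_nonZeroDivisors_eq_zero_iff hx).mp hwx,
    map_zero]

theorem IsAdjoinI.isFractionRing [IsFractionRing R K]
    (hRi : IsAdjoinI R Ri j) (hKi : IsAdjoinI K Ki jK)
    (hR : ∀ r : R, algebraMap Ri Ki (algebraMap R Ri r) = algebraMap K Ki (algebraMap R K r))
    (hj : algebraMap Ri Ki j = jK) : IsFractionRing Ri Ki := by
  refine (isLocalization_iff _ _).mpr ⟨fun y => ?_, fun z => ?_, fun hxy => ?_⟩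
  · exact hKi.isUnit_of_mem_nonZeroDivisors (IsFractionRing.nonZeroDivisors_eq_isUnit R K).le
      (hRi.algebraMap_mem_nonZeroDivisors_of_isFractionRing hKi hR hj y.2)
  · obtain ⟨s, hs, w, hw⟩ := hKi.exists_mul_eq_algebraMap hR hj z
    exact ⟨(w, ⟨_, hRi.algebraMap_mem_nonZeroDivisors hs⟩), by rw [hR]; exact hw⟩
  · exact ⟨1, by rw [hRi.algebraMap_injective_of_isFractionRing hKi hR hj hxy]⟩

theorem IsAdjoinI.mem_range_of_fixed (hKi : IsAdjoinI K Ki jK)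
    (hR : ∀ r : R, algebraMap Ri Ki (algebraMap R Ri r) = algebraMap K Ki (algebraMap R K r))
    (hj : algebraMap Ri Ki j = jK) {φK : K ≃+* K} {φKi : Ki ≃+* Ki}
    (hφKi : DiffCompat Ki φK φKi) (hφjK : φKi jK = jK)
    (hconst : ∀ a : K, φK a = a → ∃ r : R, algebraMap R K r = a) {z : Ki} (hz : φKi z = z) :
    z ∈ (algebraMap Ri Ki).range := by
  obtain ⟨⟨a, b⟩, rfl, -⟩ := hKi.2 z
  rw [map_add, map_mul, hφKi, hφKi, hφjK] at hz
  obtain ⟨ha, hb⟩ := hKi.eq_of_add_mul_eq hz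
  obtain ⟨r, rfl⟩ := hconst a ha
  obtain ⟨s, rfl⟩ := hconst b hb
  exact ⟨algebraMap R Ri r + algebraMap R Ri s * j, IsAdjoinI.algebraMap_add_mul hR hj r s⟩

theorem IsAdjoinI.map_algebraMap_mem_range {k : Type*} [CommRing k] [Algebra k R]
    [IsFractionRing R K] [Nontrivial R] (hRi : IsAdjoinI R Ri j) (hKi : IsAdjoinI K Ki jK)
    (hR : ∀ r : R, algebraMap Ri Ki (algebraMap R Ri r) = algebraMap K Ki (algebraMap R K r))
    (hj : algebraMap Ri Ki j = jK) {φR : R ≃+* R} {φK : K ≃+* K} {φKi : Ki ≃+* Ki}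
    (hsimple : IsSimpleDiffRing φR) (hφK : DiffCompat K φR φK) (hφKi : DiffCompat Ki φK φKi)
    (hφjK : φKi jK = jK) {n : ℕ} {A : Matrix (Fin n) (Fin n) k} {U : Matrix (Fin n) (Fin n) R}
    (hU : IsFundamentalMatrix φR A U) (hUgen : GeneratedByFund k U) {Θ : Ki ≃+* Ki}
    (hΘ : ∀ y, Θ (φKi y) = φKi (Θ y))
    (hΘk : ∀ c, Θ (algebraMap K Ki (algebraMap R K (algebraMap k R c)))
      = algebraMap K Ki (algebraMap R K (algebraMap k R c)))
    (hΘj : Θ jK = jK) (y : Ri) : Θ (algebraMap Ri Ki y) ∈ (algebraMap Ri Ki).range := by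
  have hconst : ∀ z, φKi z = z → z ∈ (algebraMap Ri Ki).range := fun z hz =>
    hKi.mem_range_of_fixed hR hj hφKi hφjK
      (fun a ha => hsimple.exists_algebraMap_eq_of_fixed hφK ha) hz
  have hRmem : ∀ r, Θ (algebraMap K Ki (algebraMap R K r)) ∈ (algebraMap Ri Ki).range :=
    hU.map_mem_of_generatedByFund hUgen ((algebraMap K Ki).comp (algebraMap R K))
      (fun r => by rw [RingHom.comp_apply, RingHom.comp_apply, hφKi, hφK])
      (fun r => RingHom.mem_range.mpr ⟨_, hR r⟩) hconst hΘ hΘk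
  obtain ⟨⟨a, b⟩, rfl, -⟩ := hRi.2 y
  rw [IsAdjoinI.algebraMap_add_mul hR hj, map_add, map_mul, hΘj]
  exact add_mem (hRmem a) (mul_mem (hRmem b) ⟨j, hj⟩)

end FractionRing

theorem statement8_general
    {k : Type u} [Field k] (φk : k ≃+* k)
    {n : ℕ} (A : Matrix (Fin n) (Fin n) k)
    (R : Type v) [CommRing R] [Algebra k R] (φR : R ≃+* R)
    (hPV : IsPicardVessiot k R φk φR A)
    (U : Matrix (Fin n) (Fin n) R) (hU : IsFundamentalMatrix φR A U)
    (hUgen : GeneratedByFund k U)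
    -- `R[i]`
    (Ri : Type w) [CommRing Ri] [Algebra R Ri]
    (j : Ri) (hRi : IsAdjoinI R Ri j)
    (φi : Ri ≃+* Ri)
    -- `K`, the total ring of fractions of `R`
    (K : Type w) [CommRing K] [Algebra R K] [IsLocalization (nonZeroDivisors R) K]
    (φK : K ≃+* K) (hcompatK : DiffCompat K φR φK)
    -- `K[i]`
    (Ki : Type w) [CommRing Ki] [Algebra K Ki]
    (jK : Ki) (hKi : IsAdjoinI K Ki jK)
    (φKi : Ki ≃+* Ki) (hcompatKi : DiffCompat Ki φK φKi) (hφjK : φKi jK = jK)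
    -- the canonical inclusion `R[i] → K[i]`
    (ι : Ri →+* Ki)
    (hιR : ∀ r : R, ι (algebraMap R Ri r) = algebraMap K Ki (algebraMap R K r))
    (hιj : ι j = jK)
    (hιφ : ∀ y : Ri, ι (φi y) = φKi (ι y)) :
    -- the embedding of `R` into `K[i]`
    let fR : R → Ki := fun r => algebraMap K Ki (algebraMap R K r)
    let fk : k → Ki := fun c => fR (algebraMap k R c)
    -- `{U⁻¹ψ(U) : ψ ∈ G}` = `{U⁻¹Ψ(U) : Ψ ∈ G_{K[i]}}`
    {M : Matrix (Fin n) (Fin n) Ki | ∃ ψ : Ri ≃+* Ri,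
        (∀ y : Ri, ψ (φi y) = φi (ψ y)) ∧
        (∀ c : k, ψ (algebraMap R Ri (algebraMap k R c)) = algebraMap R Ri (algebraMap k R c)) ∧
        ψ j = j ∧
        M = (U.map fR)⁻¹ * U.map fun r => ι (ψ (algebraMap R Ri r))} =
    {M : Matrix (Fin n) (Fin n) Ki | ∃ Ψ : Ki ≃+* Ki,
        (∀ y : Ki, Ψ (φKi y) = φKi (Ψ y)) ∧
        (∀ c : k, Ψ (fk c) = fk c) ∧
        Ψ jK = jK ∧
        M = (U.map fR)⁻¹ * U.map fun r => Ψ (fR r)} := by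
  intro fR fk
  obtain ⟨_, -, -, hsimple⟩ := hPV
  let _ : Algebra Ri Ki := ι.toAlgebra
  have _ : IsFractionRing Ri Ki := hRi.isFractionRing hKi hιR hιj
  have hιinj : Function.Injective ι := hRi.algebraMap_injective_of_isFractionRing hKi hιR hιj
  have hmatrix : ∀ (ψ : Ri ≃+* Ri) (Ψ : Ki ≃+* Ki), (∀ y, Ψ (ι y) = ι (ψ y)) →
      (U.map fun r => ι (ψ (algebraMap R Ri r))) = U.map fun r => Ψ (fR r) := by
    intro ψ Ψ hΨ
    ext p q
    simp only [Matrix.map_apply, fR, ← hιR, hΨ]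
  ext M
  constructor
  · rintro ⟨ψ, hψφ, hψk, hψj, rfl⟩
    obtain ⟨Ψ, hΨ⟩ : ∃ Ψ : Ki ≃+* Ki, ∀ y, Ψ (ι y) = ι (ψ y) :=
      IsFractionRing.exists_ringEquiv_extension ψ
    refine ⟨Ψ, (IsFractionRing.commute_iff_of_extension hιφ hΨ).mp hψφ, fun c => ?_, ?_,
      by rw [hmatrix ψ Ψ hΨ]⟩
    · simp only [fk, fR, ← hιR, hΨ, hψk]
    · rw [← hιj, hΨ, hψj]
  · rintro ⟨Ψ, hΨφ, hΨk, hΨj, rfl⟩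
    have hstable := fun (Θ : Ki ≃+* Ki) => hRi.map_algebraMap_mem_range hKi hιR hιj hsimple
      hcompatK hcompatKi hφjK hU hUgen (Θ := Θ)
    obtain ⟨ψ, hψ⟩ := Ψ.exists_restriction_of_mapsTo_range hιinj (hstable Ψ hΨφ hΨk hΨj)
      (hstable Ψ.symm (Function.Semiconj.inverse_left hΨφ Ψ.left_inv Ψ.right_inv)
        (fun c => Ψ.symm_apply_eq.mpr (hΨk c).symm) (Ψ.symm_apply_eq.mpr hΨj.symm))
    refine ⟨ψ, (IsFractionRing.commute_iff_of_extension hιφ hψ).mpr hΨφ, fun c => hιinj ?_,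
      hιinj ?_, by rw [hmatrix ψ Ψ hψ]⟩
    · rw [← hψ, hιR]
      exact hΨk c
    · rw [← hψ, hιj, hΨj]

/-- For a real Picard–Vessiot extension `(R, φ)` with fundamental matrix `U` and total
ring of fractions `K`, the real difference Galois group `G` (restrictions of difference
automorphisms of `R[i]` fixing `k[i]`) and the classical difference Galois group
`G_{K[i]}` (difference automorphisms of `K[i]` fixing `k[i]`) give the same set of
matrices `U⁻¹ψ(U)`. -/
theorem statement8
    {k : Type u} [Field k] [CharZero k] (φk : k ≃+* k)
    (hk_real : IsRealRing k)
    (hC_rc : IsRealClosedField (↥(fixedSubfield φk)))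
    {n : ℕ} (A : Matrix (Fin n) (Fin n) k) (hA : IsUnit A.det)
    (R : Type v) [CommRing R] [Algebra k R] (φR : R ≃+* R)
    (hPV : IsPicardVessiot k R φk φR A) (hRreal : IsRealRing R)
    (U : Matrix (Fin n) (Fin n) R) (hU : IsFundamentalMatrix φR A U)
    (hUgen : GeneratedByFund k U)
    -- `R[i]`
    (Ri : Type w) [CommRing Ri] [Algebra R Ri]
    (j : Ri) (hRi : IsAdjoinI R Ri j)
    (φi : Ri ≃+* Ri) (hcompati : DiffCompat Ri φR φi) (hφj : φi j = j)
    -- `K`, the total ring of fractions of `R`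
    (K : Type w) [CommRing K] [Algebra R K] [IsLocalization (nonZeroDivisors R) K]
    (φK : K ≃+* K) (hcompatK : DiffCompat K φR φK)
    -- `K[i]`
    (Ki : Type w) [CommRing Ki] [Algebra K Ki]
    (jK : Ki) (hKi : IsAdjoinI K Ki jK)
    (φKi : Ki ≃+* Ki) (hcompatKi : DiffCompat Ki φK φKi) (hφjK : φKi jK = jK)
    -- the canonical inclusion `R[i] → K[i]`
    (ι : Ri →+* Ki)
    (hιR : ∀ r : R, ι (algebraMap R Ri r) = algebraMap K Ki (algebraMap R K r))
    (hιj : ι j = jK)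
    (hιφ : ∀ y : Ri, ι (φi y) = φKi (ι y)) :
    -- the embedding of `R` into `K[i]`
    let fR : R → Ki := fun r => algebraMap K Ki (algebraMap R K r)
    let fk : k → Ki := fun c => fR (algebraMap k R c)
    -- `{U⁻¹ψ(U) : ψ ∈ G}` = `{U⁻¹Ψ(U) : Ψ ∈ G_{K[i]}}`
    {M : Matrix (Fin n) (Fin n) Ki | ∃ ψ : Ri ≃+* Ri,
        (∀ y : Ri, ψ (φi y) = φi (ψ y)) ∧
        (∀ c : k, ψ (algebraMap R Ri (algebraMap k R c)) = algebraMap R Ri (algebraMap k R c)) ∧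
        ψ j = j ∧
        M = (U.map fR)⁻¹ * U.map fun r => ι (ψ (algebraMap R Ri r))} =
    {M : Matrix (Fin n) (Fin n) Ki | ∃ Ψ : Ki ≃+* Ki,
        (∀ y : Ki, Ψ (φKi y) = φKi (Ψ y)) ∧
        (∀ c : k, Ψ (fk c) = fk c) ∧
        Ψ jK = jK ∧
        M = (U.map fR)⁻¹ * U.map fun r => Ψ (fR r)} :=
  statement8_general φk A R φR hPV U hU hUgen Ri j hRi φi K φK hcompatK Ki jK hKi φKi hcompatKi hφjK
    ι hιR hιj hιφ
end

section
/- Let φ be the ℝ-algebra automorphism of the Laurent polynomial ring ℝ[T, T⁻¹] determined by φ(T) = √2·T. Then (ℝ[T, T⁻¹], φ) is a simple difference ring: its only ideals stable under φ are (0) and the whole ring. -/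
universe u v w x

open scoped TensorProduct

/-!
If `φ` fixes the constants and sends `T` to `q T`, it multiplies the coefficient of `Tᵐ` by `qᵐ`.
Given a nonzero element `f` of a difference ideal and an exponent `n` in its support,
`φ f - qⁿ f` lies in the ideal and has strictly smaller support; when `q` is not a root of unity
it vanishes only if `f` is a monomial. Descending on the size of the support therefore produces
a monomial `a Tⁿ` with `a ≠ 0` in the ideal, and monomials are units.
-/

namespace LaurentPolynomial

section Semiring

variable {R : Type*} [Semiring R]

lemma coeff_C_mul_T (a : R) (n m : ℤ) : (C a * T n).coeff m = if n = m then a else 0 := by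
  rw [← single_eq_C_mul_T, AddMonoidAlgebra.coeff_single, Finsupp.single_apply]

lemma coeff_C_mul (a : R) (f : R[T;T⁻¹]) (m : ℤ) : (C a * f).coeff m = a * f.coeff m := by
  rw [← smul_eq_C_mul, AddMonoidAlgebra.coeff_smul_apply, smul_eq_mul]

end Semiring

variable {K : Type*} [Field K] {φ : K[T;T⁻¹] ≃+* K[T;T⁻¹]} {q : K}

lemma map_T_of_map_T_one (hq : q ≠ 0)
    (hφT : φ (T 1) = C q * T 1) (n : ℤ) : φ (T n) = C (q ^ n) * T n := by
  have step : ∀ k d : ℤ, φ (T d) = C (q ^ d) * T d → φ (T k) = C (q ^ k) * T k →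
      φ (T (k + d)) = C (q ^ (k + d)) * T (k + d) := by
    intro k d hd hk
    rw [T_add, map_mul, hk, hd, zpow_add₀ hq, map_mul]
    ring
  have hφT_neg : φ (T (-1)) = C (q ^ (-1 : ℤ)) * T (-1) := by
    refine left_inv_eq_right_inv (a := φ (T 1)) ?_ ?_
    · rw [← map_mul, ← T_add, neg_add_cancel, T_zero, map_one]
    · rw [hφT, mul_mul_mul_comm, ← map_mul, ← T_add, zpow_neg_one, mul_inv_cancel₀ hq,
        add_neg_cancel, T_zero, map_one, mul_one]
  induction n using Int.induction_on with
  | zero => rw [T_zero, map_one, zpow_zero, map_one, mul_one]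
  | succ k ih => exact step k 1 (by rwa [zpow_one]) ih
  | pred k ih => exact step (-k) (-1) hφT_neg ih

lemma coeff_map_of_map_T_one (hq : q ≠ 0)
    (hφC : ∀ a, φ (C a) = C a) (hφT : φ (T 1) = C q * T 1) (f : K[T;T⁻¹]) (m : ℤ) :
    (φ f).coeff m = q ^ m * f.coeff m := by
  induction f using LaurentPolynomial.induction_on' with
  | add f g hf hg => simp only [map_add, AddMonoidAlgebra.coeff_add, Finsupp.add_apply, hf, hg,
      mul_add]
  | C_mul_T n a =>
    rw [map_mul, hφC, map_T_of_map_T_one hq hφT, ← mul_assoc, ← map_mul, coeff_C_mul_T,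
      coeff_C_mul_T]
    split_ifs with h
    · rw [h, mul_comm]
    · rw [mul_zero]

lemma coeff_map_sub_C_mul (hφ : ∀ f m, (φ f).coeff m = q ^ m * f.coeff m)
    (f : K[T;T⁻¹]) (n m : ℤ) :
    (φ f - C (q ^ n) * f).coeff m = (q ^ m - q ^ n) * f.coeff m := by
  rw [AddMonoidAlgebra.coeff_sub, Finsupp.sub_apply, hφ, coeff_C_mul, sub_mul]

lemma support_map_sub_C_mul_subset (hφ : ∀ f m, (φ f).coeff m = q ^ m * f.coeff m)
    (f : K[T;T⁻¹]) (n : ℤ) :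
    (φ f - C (q ^ n) * f).coeff.support ⊆ f.coeff.support.erase n := by
  intro m hm
  rw [Finsupp.mem_support_iff, coeff_map_sub_C_mul hφ] at hm
  obtain ⟨hqmn, hfm⟩ := mul_ne_zero_iff.mp hm
  exact Finset.mem_erase.mpr
    ⟨fun h => hqmn (by rw [h, sub_self]), Finsupp.mem_support_iff.mpr hfm⟩

lemma eq_C_mul_T_of_map_eq (hφ : ∀ f m, (φ f).coeff m = q ^ m * f.coeff m)
    (hq : Function.Injective fun n : ℤ => q ^ n) {f : K[T;T⁻¹]} {n : ℤ}
    (hf : φ f = C (q ^ n) * f) : f = C (f.coeff n) * T n := by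
  ext m
  rw [coeff_C_mul_T]
  split_ifs with h
  · rw [h]
  · have hzero := congrArg (fun g => g.coeff m) (sub_eq_zero.mpr hf)
    simp only [coeff_map_sub_C_mul hφ, AddMonoidAlgebra.coeff_zero, Finsupp.coe_zero,
      Pi.zero_apply, mul_eq_zero, sub_eq_zero] at hzero
    exact hzero.resolve_left fun hqm => h (hq hqm).symm

lemma exists_C_mul_T_mem (hφ : ∀ f m, (φ f).coeff m = q ^ m * f.coeff m)
    (hq : Function.Injective fun n : ℤ => q ^ n) {I : Ideal K[T;T⁻¹]} (hI : IsDiffIdeal φ I)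
    {f : K[T;T⁻¹]} (hfI : f ∈ I) (hf0 : f ≠ 0) : ∃ a ≠ 0, ∃ n, C a * T n ∈ I := by
  induction h : f.coeff.support.card using Nat.strong_induction_on generalizing f with
  | _ k ih =>
    obtain ⟨n, hn⟩ :=
      Finsupp.support_nonempty_iff.mpr (AddMonoidAlgebra.coeff_eq_zero.not.mpr hf0)
    by_cases hg : φ f - C (q ^ n) * f = 0
    · rw [eq_C_mul_T_of_map_eq hφ hq (sub_eq_zero.mp hg)] at hfI
      exact ⟨_, Finsupp.mem_support_iff.mp hn, n, hfI⟩
    · refine ih _ ?_ (I.sub_mem (hI f hfI) (I.mul_mem_left _ hfI)) hg rfl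
      exact h ▸ (Finset.card_le_card (support_map_sub_C_mul_subset hφ f n)).trans_lt
        (Finset.card_erase_lt_of_mem hn)

theorem isSimpleDiffRing_of_map_T_one (hφC : ∀ a, φ (C a) = C a) (hφT : φ (T 1) = C q * T 1)
    (hq : Function.Injective fun n : ℤ => q ^ n) : IsSimpleDiffRing φ := by
  have hq0 : q ≠ 0 := fun h => absurd (@hq 1 2 (by simp [h])) (by norm_num)
  intro I hI
  refine or_iff_not_imp_left.mpr fun hI0 => ?_
  obtain ⟨f, hfI, hf0⟩ := Submodule.exists_mem_ne_zero_of_ne_bot hI0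
  obtain ⟨a, ha, n, hmem⟩ :=
    exists_C_mul_T_mem (coeff_map_of_map_T_one hq0 hφC hφT) hq hI hfI hf0
  exact I.eq_top_of_isUnit_mem hmem ((ha.isUnit.map C).mul (isUnit_T n))

end LaurentPolynomial

/-- The Laurent polynomial ring `ℝ[T, T⁻¹]`, with the `ℝ`-algebra automorphism `φ`
determined by `φ(T) = √2·T`, is a simple difference ring. -/
theorem statement14
    (φ : LaurentPolynomial ℝ ≃+* LaurentPolynomial ℝ)
    (hφC : ∀ r : ℝ, φ (LaurentPolynomial.C r) = LaurentPolynomial.C r)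
    (hφT : φ (LaurentPolynomial.T 1) =
      LaurentPolynomial.C (Real.sqrt 2) * LaurentPolynomial.T 1) :
    IsSimpleDiffRing φ :=
  LaurentPolynomial.isSimpleDiffRing_of_map_T_one hφC hφT <|
    zpow_right_injective₀ (by positivity) (by norm_num [Real.sqrt_eq_one])
end
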